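/- arXiv:1803.08586 — 2 statements merged into one kernel-verified Lean document; each statement's English description precedes it below -/
import Mathlib

section
/- Let f₀ : [0,1]^d → ℝ be strongly convex with parameter σ > 0 and smooth, with interior minimizer x*. Then there exist constants c₀, c₁, c₂ > 0 such that for all ε ∈ (0, c₀], the Lebesgue measure μ_{f₀}(ε) of the level set L_{f₀}(ε) = {x : f₀(x) ≤ f₀* + ε} satisfies c₁·ε^{d/2} ≤ μ_{f₀}(ε) ≤ c₂·ε^{d/2}. -/
/-!
Along the segment from the interior minimizer `x*` to `x`, the Hessian bounds and
`∇f₀(x*) = 0` give `σ/2 ‖x - x*‖² ≤ f₀ x - f₀* ≤ M/2 ‖x - x*‖²` on the cube. Hence the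
sublevel set at height `f₀* + ε` contains the ball of radius `√(2ε/M)` (once that ball fits
in the cube) and lies in the ball of radius `√(2ε/σ)`; both balls have volume `≍ ε^{d/2}`.
-/

open Set MeasureTheory Metric

lemma monotoneOn_Icc_of_hasDerivAt_nonneg {g g' : ℝ → ℝ} {a b : ℝ}
    (hg : ∀ t, HasDerivAt g (g' t) t) (hg' : ∀ t ∈ Ioo a b, 0 ≤ g' t) :
    MonotoneOn g (Icc a b) :=
  monotoneOn_of_hasDerivWithinAt_nonneg (convex_Icc a b)
    (fun t _ => (hg t).continuousAt.continuousWithinAt) (fun t _ => (hg t).hasDerivWithinAt)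
    (by rwa [interior_Icc])

lemma half_mul_le_sub_of_le_deriv2 {φ φ' φ'' : ℝ → ℝ} {a : ℝ}
    (hφ : ∀ t, HasDerivAt φ (φ' t) t) (hφ' : ∀ t, HasDerivAt φ' (φ'' t) t)
    (h0 : φ' 0 = 0) (ha : ∀ t ∈ Icc (0 : ℝ) 1, a ≤ φ'' t) :
    a / 2 ≤ φ 1 - φ 0 := by
  have hlin : ∀ t ∈ Icc (0 : ℝ) 1, a * t ≤ φ' t := by
    intro t ht
    have hmono := monotoneOn_Icc_of_hasDerivAt_nonneg (g := fun t => φ' t - a * t)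
      (fun t => ((hφ' t).sub ((hasDerivAt_id t).const_mul a)).congr_deriv (by simp))
      (fun t ht => sub_nonneg.2 (ha t (Ioo_subset_Icc_self ht)))
    have := hmono ⟨le_rfl, zero_le_one⟩ ht ht.1
    simp only [h0, mul_zero, sub_zero] at this
    linarith
  have hmono := monotoneOn_Icc_of_hasDerivAt_nonneg (g := fun t => φ t - a / 2 * t ^ 2)
    (fun t => ((hφ t).sub ((hasDerivAt_pow 2 t).const_mul (a / 2))).congr_deriv (by ring))
    (fun t ht => sub_nonneg.2 (hlin t (Ioo_subset_Icc_self ht)))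
  have := hmono ⟨le_rfl, zero_le_one⟩ ⟨zero_le_one, le_rfl⟩ zero_le_one
  simp only [zero_pow two_ne_zero, one_pow, mul_zero, mul_one, sub_zero] at this
  linarith

section Hessian

variable {E : Type*} [NormedAddCommGroup E] [NormedSpace ℝ E] {f : E → ℝ}

lemma hasDerivAt_add_smul (x v : E) (t : ℝ) : HasDerivAt (fun s : ℝ => x + s • v) v t := by
  simpa using ((hasDerivAt_id t).smul_const v).const_add x

lemma ContDiff.hasDerivAt_comp_add_smul (hf : ContDiff ℝ 1 f) (x v : E) (t : ℝ) :
    HasDerivAt (fun s : ℝ => f (x + s • v)) (fderiv ℝ f (x + t • v) v) t :=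
  ((hf.differentiable one_ne_zero) _).hasFDerivAt.comp_hasDerivAt t (hasDerivAt_add_smul x v t)

lemma ContDiff.hasDerivAt_fderiv_comp_add_smul (hf : ContDiff ℝ 2 f) (x v : E) (t : ℝ) :
    HasDerivAt (fun s : ℝ => fderiv ℝ f (x + s • v) v)
      (iteratedFDeriv ℝ 2 f (x + t • v) ![v, v]) t := by
  have hdf : Differentiable ℝ (fderiv ℝ f) :=
    (hf.fderiv_right (by norm_num)).differentiable one_ne_zero
  have := ((hdf _).hasFDerivAt.comp_hasDerivAt t (hasDerivAt_add_smul x v t)).clm_apply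
    (hasDerivAt_const t v)
  rw [iteratedFDeriv_two_apply]
  simpa using this

variable {s : Set E} {x₀ x : E}

lemma Convex.mul_sq_norm_sub_le_sub_of_hessian_ge {σ : ℝ} (hs : Convex ℝ s)
    (hf : ContDiff ℝ 2 f) (hx₀ : x₀ ∈ s) (hx : x ∈ s) (hcrit : fderiv ℝ f x₀ = 0)
    (hH : ∀ y ∈ s, ∀ v, σ * ‖v‖ ^ 2 ≤ iteratedFDeriv ℝ 2 f y ![v, v]) :
    σ / 2 * ‖x - x₀‖ ^ 2 ≤ f x - f x₀ := by
  have := half_mul_le_sub_of_le_deriv2 (a := σ * ‖x - x₀‖ ^ 2)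
    ((hf.of_le one_le_two).hasDerivAt_comp_add_smul x₀ (x - x₀))
    (hf.hasDerivAt_fderiv_comp_add_smul x₀ (x - x₀))
    (by simp [hcrit]) (fun t ht => hH _ (hs.add_smul_sub_mem hx₀ hx ht) _)
  simp only [one_smul, add_sub_cancel, zero_smul, add_zero] at this
  linarith

lemma Convex.sub_le_mul_sq_norm_sub_of_hessian_le {M : ℝ} (hs : Convex ℝ s)
    (hf : ContDiff ℝ 2 f) (hx₀ : x₀ ∈ s) (hx : x ∈ s) (hcrit : fderiv ℝ f x₀ = 0)
    (hH : ∀ y ∈ s, ∀ v, iteratedFDeriv ℝ 2 f y ![v, v] ≤ M * ‖v‖ ^ 2) :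
    f x - f x₀ ≤ M / 2 * ‖x - x₀‖ ^ 2 := by
  have := half_mul_le_sub_of_le_deriv2 (a := -(M * ‖x - x₀‖ ^ 2))
    ((hf.of_le one_le_two).hasDerivAt_comp_add_smul x₀ (x - x₀) · |>.neg)
    (hf.hasDerivAt_fderiv_comp_add_smul x₀ (x - x₀) · |>.neg)
    (by simp [hcrit]) (fun t ht => neg_le_neg (hH _ (hs.add_smul_sub_mem hx₀ hx ht) _))
  simp only [Pi.neg_apply, one_smul, add_sub_cancel, zero_smul, add_zero] at this
  linarith

end Hessian

section Sublevel

variable {E : Type*} [NormedAddCommGroup E] {f : E → ℝ} {s : Set E} {x₀ : E}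

lemma closedBall_sqrt_subset_sublevel {M ε : ℝ} (hM : 0 < M) (hε : 0 ≤ ε)
    (hball : closedBall x₀ √(2 * ε / M) ⊆ s)
    (hup : ∀ x ∈ s, f x - f x₀ ≤ M / 2 * ‖x - x₀‖ ^ 2) :
    closedBall x₀ √(2 * ε / M) ⊆ {x ∈ s | f x ≤ f x₀ + ε} := by
  intro x hx
  have hsq : ‖x - x₀‖ ^ 2 ≤ 2 * ε / M :=
    (Real.le_sqrt (norm_nonneg _) (by positivity)).1 (mem_closedBall_iff_norm.1 hx)
  have hMε : M / 2 * (2 * ε / M) = ε := by field_simp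
  refine ⟨hball hx, ?_⟩
  nlinarith [hup x (hball hx)]

lemma sublevel_subset_closedBall_sqrt {σ ε : ℝ} (hσ : 0 < σ)
    (hlow : ∀ x ∈ s, σ / 2 * ‖x - x₀‖ ^ 2 ≤ f x - f x₀) :
    {x ∈ s | f x ≤ f x₀ + ε} ⊆ closedBall x₀ √(2 * ε / σ) := by
  rintro x ⟨hxs, hxε⟩
  refine mem_closedBall_iff_norm.2 (Real.le_sqrt_of_sq_le ?_)
  rw [le_div_iff₀ hσ]
  nlinarith [hlow x hxs]

end Sublevel

lemma MeasureTheory.Measure.addHaar_closedBall_sqrt_toReal {E : Type*} [NormedAddCommGroup E]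
    [NormedSpace ℝ E] [MeasurableSpace E] [BorelSpace E] [FiniteDimensional ℝ E]
    (μ : Measure E) [μ.IsAddHaarMeasure] (x : E) {r : ℝ} (hr : 0 ≤ r) :
    (μ (closedBall x √r)).toReal =
      r ^ ((Module.finrank ℝ E : ℝ) / 2) * (μ (closedBall 0 1)).toReal := by
  rw [μ.addHaar_closedBall' x (Real.sqrt_nonneg r), ENNReal.toReal_mul,
    ENNReal.toReal_ofReal (by positivity), Real.sqrt_eq_rpow, ← Real.rpow_natCast,
    ← Real.rpow_mul hr]
  ring_nf

lemma EuclideanSpace.convex_setOf_forall_mem {ι : Type*} {t : Set ℝ} (ht : Convex ℝ t) :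
    Convex ℝ {x : EuclideanSpace ℝ ι | ∀ i, x i ∈ t} := by
  intro x hx y hy a b ha hb hab i
  simpa using ht (hx i) (hy i) ha hb hab

theorem stmt_4_general (d : ℕ) (f₀ : EuclideanSpace ℝ (Fin d) → ℝ)
    (σ M : ℝ) (hσ : 0 < σ) (hσM : σ ≤ M)
    (cube : Set (EuclideanSpace ℝ (Fin d)))
    (hcube : cube = {x | ∀ i, x i ∈ Set.Icc (0 : ℝ) 1})
    (hf : ContDiff ℝ 2 f₀)
    (hHess : ∀ x ∈ cube, ∀ v : EuclideanSpace ℝ (Fin d),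
      σ * ‖v‖ ^ 2 ≤ iteratedFDeriv ℝ 2 f₀ x ![v, v] ∧
      iteratedFDeriv ℝ 2 f₀ x ![v, v] ≤ M * ‖v‖ ^ 2)
    (xstar : EuclideanSpace ℝ (Fin d)) (hint : xstar ∈ interior cube)
    (hmin : ∀ x ∈ cube, f₀ xstar ≤ f₀ x) :
    ∃ c₀ > (0 : ℝ), ∃ c₁ > (0 : ℝ), ∃ c₂ > (0 : ℝ),
      ∀ ε ∈ Set.Ioc (0 : ℝ) c₀,
        c₁ * ε ^ ((d : ℝ) / 2) ≤
          (volume {x ∈ cube | f₀ x ≤ f₀ xstar + ε}).toReal ∧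
        (volume {x ∈ cube | f₀ x ≤ f₀ xstar + ε}).toReal ≤ c₂ * ε ^ ((d : ℝ) / 2) := by
  have hM : 0 < M := hσ.trans_le hσM
  have hconv : Convex ℝ cube := hcube ▸ EuclideanSpace.convex_setOf_forall_mem (convex_Icc 0 1)
  have hnhds : cube ∈ nhds xstar := mem_interior_iff_mem_nhds.1 hint
  have hxstar : xstar ∈ cube := interior_subset hint
  have hcrit : fderiv ℝ f₀ xstar = 0 :=
    IsLocalMin.fderiv_eq_zero (Filter.mem_of_superset hnhds hmin)
  obtain ⟨ρ, hρ, hball⟩ := nhds_basis_closedBall.mem_iff.1 hnhds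
  set B := (volume (closedBall (0 : EuclideanSpace ℝ (Fin d)) 1)).toReal
  have hB : 0 < B :=
    ENNReal.toReal_pos (measure_closedBall_pos _ _ one_pos).ne' measure_closedBall_lt_top.ne
  refine ⟨M * ρ ^ 2 / 2, by positivity, (2 / M) ^ ((d : ℝ) / 2) * B, by positivity,
    (2 / σ) ^ ((d : ℝ) / 2) * B, by positivity, fun ε ⟨hε, hεc⟩ => ?_⟩
  have hvol : ∀ a > 0, (volume (closedBall xstar √(2 * ε / a))).toReal =
      (2 / a) ^ ((d : ℝ) / 2) * B * ε ^ ((d : ℝ) / 2) := by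
    intro a ha
    rw [volume.addHaar_closedBall_sqrt_toReal xstar (by positivity), finrank_euclideanSpace_fin,
      mul_div_right_comm, Real.mul_rpow (by positivity) hε.le]
    ring
  have hsmall : closedBall xstar √(2 * ε / M) ⊆ cube := by
    refine (closedBall_subset_closedBall (Real.sqrt_le_iff.2 ⟨hρ.le, ?_⟩)).trans hball
    rw [div_le_iff₀ hM]
    linarith
  have hinner := closedBall_sqrt_subset_sublevel hM hε.le hsmall fun x hx =>
    hconv.sub_le_mul_sq_norm_sub_of_hessian_le hf hxstar hx hcrit fun y hy v => (hHess y hy v).2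
  have houter := sublevel_subset_closedBall_sqrt (ε := ε) hσ fun x hx =>
    hconv.mul_sq_norm_sub_le_sub_of_hessian_ge hf hxstar hx hcrit fun y hy v => (hHess y hy v).1
  constructor
  · rw [← hvol M hM]
    exact ENNReal.toReal_mono ((measure_mono houter).trans_lt measure_closedBall_lt_top).ne
      (measure_mono hinner)
  · rw [← hvol σ hσ]
    exact ENNReal.toReal_mono measure_closedBall_lt_top.ne (measure_mono houter)

/-- For a strongly convex and smooth function on the unit cube with interior minimizer,
the Lebesgue measure of the `ε`-sublevel set scales as `ε^{d/2}` for small `ε`. -/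
theorem stmt_4 (d : ℕ) (hd : 1 ≤ d) (f₀ : EuclideanSpace ℝ (Fin d) → ℝ)
    (σ M : ℝ) (hσ : 0 < σ) (hσM : σ ≤ M)
    (cube : Set (EuclideanSpace ℝ (Fin d)))
    (hcube : cube = {x | ∀ i, x i ∈ Set.Icc (0 : ℝ) 1})
    (hf : ContDiff ℝ 2 f₀)
    (hHess : ∀ x ∈ cube, ∀ v : EuclideanSpace ℝ (Fin d),
      σ * ‖v‖ ^ 2 ≤ iteratedFDeriv ℝ 2 f₀ x ![v, v] ∧
      iteratedFDeriv ℝ 2 f₀ x ![v, v] ≤ M * ‖v‖ ^ 2)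
    (xstar : EuclideanSpace ℝ (Fin d)) (hint : xstar ∈ interior cube)
    (hmin : ∀ x ∈ cube, f₀ xstar ≤ f₀ x) :
    ∃ c₀ > (0 : ℝ), ∃ c₁ > (0 : ℝ), ∃ c₂ > (0 : ℝ),
      ∀ ε ∈ Set.Ioc (0 : ℝ) c₀,
        c₁ * ε ^ ((d : ℝ) / 2) ≤
          (volume {x ∈ cube | f₀ x ≤ f₀ xstar + ε}).toReal ∧
        (volume {x ∈ cube | f₀ x ≤ f₀ xstar + ε}).toReal ≤ c₂ * ε ^ ((d : ℝ) / 2) :=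
  stmt_4_general d f₀ σ M hσ hσM cube hcube hf hHess xstar hint hmin
end

section
/- Let k be a nonnegative integer, α ∈ (k, k+1], and f : B → ℝ a k-times differentiable function on a convex set B ⊆ ℝ^d containing x, such that all partial derivatives of f up to order k are bounded by M and the k-th order partial derivatives are (α-k)-Hölder continuous with constant M with respect to the ℓ∞ norm. Let f̃_x be the degree-k Taylor polynomial of f at x. Then for every z ∈ B with ‖z - x‖_∞ ≤ h, |f(z) - f̃_x(z)| ≤ M·d^k·h^α. -/
open Set Real

/-!
Restrict `f` to the segment `t ↦ x + t (z - x)`, `t ∈ [0, 1]`: its `j`-th derivative there is the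
`j`-th derivative of `f` evaluated on the diagonal `(z - x, …, z - x)`. Taylor's theorem with
Lagrange remainder of order `k` gives `f z - f̃ₓ z = (D^k f(y) - D^k f(x))(z - x, …, z - x) / k!` for
some `y` on the segment, and the Hölder condition bounds this by `M ‖z - x‖^(α - k) ‖z - x‖^k`.
-/

open AffineMap Nat

section

variable {E : Type*} [NormedAddCommGroup E] [NormedSpace ℝ E] {n : ℕ} {f : E → ℝ} {s : Set E}
  {x z : E}

theorem hasFTaylorSeriesUpToOn_comp_lineMap (hf : ContDiffOn ℝ n f s) (hs : UniqueDiffOn ℝ s)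
    (hxz : segment ℝ x z ⊆ s) :
    HasFTaylorSeriesUpToOn n (f ∘ lineMap x z)
      (fun t j => (iteratedFDerivWithin ℝ j f s (lineMap x z t)).compContinuousLinearMap
        fun _ => (ContinuousAffineMap.lineMap x z : ℝ →ᴬ[ℝ] E).contLinear) (Icc 0 1) :=
  ((hf.ftaylorSeriesWithin hs).comp_continuousAffineMap
    (ContinuousAffineMap.lineMap x z)).mono fun _ ht =>
    hxz (lineMap_mem_segment ℝ x z ht)

theorem iteratedDerivWithin_comp_lineMap (hf : ContDiffOn ℝ n f s) (hs : UniqueDiffOn ℝ s)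
    (hxz : segment ℝ x z ⊆ s) {j : ℕ} (hj : j ≤ n) {t : ℝ} (ht : t ∈ Icc 0 1) :
    iteratedDerivWithin j (f ∘ lineMap x z) (Icc 0 1) t =
      iteratedFDerivWithin ℝ j f s (lineMap x z t) (fun _ => z - x) := by
  rw [iteratedDerivWithin_eq_iteratedFDerivWithin,
    ← (hasFTaylorSeriesUpToOn_comp_lineMap hf hs hxz).eq_iteratedFDerivWithin_of_uniqueDiffOn
      (mod_cast hj) (uniqueDiffOn_Icc one_pos) ht]
  simp

theorem exists_mem_segment_sub_taylor_eq (hf : ContDiffOn ℝ n f s) (hs : UniqueDiffOn ℝ s)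
    (hxz : segment ℝ x z ⊆ s) :
    ∃ y ∈ segment ℝ x z,
      f z - ∑ j ∈ Finset.range n, (j ! : ℝ)⁻¹ * iteratedFDerivWithin ℝ j f s x (fun _ => z - x) =
        (n ! : ℝ)⁻¹ * iteratedFDerivWithin ℝ n f s y (fun _ => z - x) := by
  cases n with
  | zero => exact ⟨z, right_mem_segment ℝ x z, by simp⟩
  | succ m =>
    have hg := (hasFTaylorSeriesUpToOn_comp_lineMap hf hs hxz).contDiffOn
    obtain ⟨ξ, hξ, hrem⟩ := taylor_mean_remainder_lagrange (f := f ∘ lineMap x z) (n := m)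
      (x₀ := 0) (x := 1) zero_ne_one
      (by rw [uIcc_of_le zero_le_one]; exact hg.of_le (mod_cast m.le_succ))
      (by
        rw [uIcc_of_le zero_le_one, uIoo_of_le zero_le_one]
        exact (hg.differentiableOn_iteratedDerivWithin (mod_cast m.lt_succ_self)
          (uniqueDiffOn_Icc one_pos)).mono Ioo_subset_Icc_self)
    rw [uIoo_of_le zero_le_one] at hξ
    have hT : ∀ j ∈ Finset.range (m + 1),
        ((j ! : ℝ)⁻¹ * (1 - 0 : ℝ) ^ j) •
            iteratedDerivWithin j (f ∘ lineMap x z) (Icc 0 1) (0 : ℝ) =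
          (j ! : ℝ)⁻¹ * iteratedFDerivWithin ℝ j f s x (fun _ => z - x) := fun j hj => by
      rw [iteratedDerivWithin_comp_lineMap hf hs hxz (Finset.mem_range.mp hj).le
        (left_mem_Icc.mpr zero_le_one)]
      simp
    rw [uIcc_of_le zero_le_one, taylor_within_apply, Finset.sum_congr rfl hT,
      iteratedDerivWithin_comp_lineMap hf hs hxz le_rfl (Ioo_subset_Icc_self hξ)] at hrem
    refine ⟨lineMap x z ξ, lineMap_mem_segment ℝ x z (Ioo_subset_Icc_self hξ), ?_⟩
    simpa [div_eq_inv_mul] using hrem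

theorem abs_sub_taylor_le_of_holder {k : ℕ} {α M : ℝ} (hα : (k : ℝ) < α) (hM : 0 ≤ M)
    (hf : ContDiffOn ℝ k f s) (hs : UniqueDiffOn ℝ s) (hxz : segment ℝ x z ⊆ s)
    (hHolder : ∀ y ∈ segment ℝ x z,
      ‖iteratedFDerivWithin ℝ k f s y - iteratedFDerivWithin ℝ k f s x‖ ≤ M * ‖y - x‖ ^ (α - k)) :
    |f z - ∑ j ∈ Finset.range (k + 1),
        (j ! : ℝ)⁻¹ * iteratedFDerivWithin ℝ j f s x (fun _ => z - x)| ≤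
      M * ‖z - x‖ ^ α / k ! := by
  obtain ⟨y, hy, hrem⟩ := exists_mem_segment_sub_taylor_eq hf hs hxz
  have hyx : ‖y - x‖ ^ (α - k) ≤ ‖z - x‖ ^ (α - k) :=
    rpow_le_rpow (norm_nonneg _) (norm_sub_le_of_mem_segment hy) (by linarith)
  have hD : |(iteratedFDerivWithin ℝ k f s y - iteratedFDerivWithin ℝ k f s x) fun _ => z - x|
      ≤ M * ‖z - x‖ ^ α := by
    calc _ ≤ ‖iteratedFDerivWithin ℝ k f s y - iteratedFDerivWithin ℝ k f s x‖ * ‖z - x‖ ^ k :=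
          ContinuousMultilinearMap.le_opNorm_mul_pow_of_le _ (pi_norm_const_le _)
      _ ≤ M * ‖z - x‖ ^ (α - k) * ‖z - x‖ ^ k := by
          gcongr
          exact (hHolder y hy).trans (mul_le_mul_of_nonneg_left hyx hM)
      _ = M * ‖z - x‖ ^ α := by
          rw [mul_assoc, ← rpow_add_natCast' (norm_nonneg _) (by linarith), sub_add_cancel]
  rw [Finset.sum_range_succ, ← sub_sub, hrem, ← mul_sub, ← sub_apply, abs_mul, abs_inv,
    Nat.abs_cast, inv_mul_eq_div]
  exact div_le_div_of_nonneg_right hD (Nat.cast_nonneg _)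

end

theorem stmt_7_general (d : ℕ) (hd : 1 ≤ d) (k : ℕ) (α : ℝ) (hα : (k : ℝ) < α)
    (M : ℝ) (hM : 0 < M)
    (B : Set (Fin d → ℝ)) (hB : Convex ℝ B) (hBu : UniqueDiffOn ℝ B)
    (x : Fin d → ℝ) (hx : x ∈ B)
    (f : (Fin d → ℝ) → ℝ) (hf : ContDiffOn ℝ k f B)
    (hHolder : ∀ u ∈ B, ∀ v ∈ B,
      ‖iteratedFDerivWithin ℝ k f B u - iteratedFDerivWithin ℝ k f B v‖ ≤
        M * ‖u - v‖ ^ (α - k))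
    (h : ℝ) :
    ∀ z ∈ B, ‖z - x‖ ≤ h →
      |f z - ∑ j ∈ Finset.range (k + 1),
          ((j.factorial : ℝ))⁻¹ * iteratedFDerivWithin ℝ j f B x (fun _ => z - x)| ≤
        M * d ^ k * h ^ α := by
  intro z hz hzh
  have hxz := hB.segment_subset hx hz
  have hh : 0 ≤ h := (norm_nonneg _).trans hzh
  calc _ ≤ M * ‖z - x‖ ^ α / k ! := abs_sub_taylor_le_of_holder hα hM.le hf hBu hxz
          fun y hy => hHolder y (hxz hy) x hx
    _ ≤ M * ‖z - x‖ ^ α := div_le_self (by positivity) (mod_cast k.factorial_pos)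
    _ ≤ M * h ^ α := by gcongr; linarith
    _ ≤ M * d ^ k * h ^ α := by
        gcongr
        exact le_mul_of_one_le_right hM.le (one_le_pow₀ (mod_cast hd))

/-- Taylor approximation bound for Hölder-smooth functions: if `f` is `k`-times
differentiable on a convex set `B ⊆ ℝ^d` (with the `ℓ∞` norm), all derivatives up to
order `k` are bounded by `M` and the `k`-th derivative is `(α-k)`-Hölder with constant
`M`, then the degree-`k` Taylor polynomial of `f` at `x` approximates `f` to within
`M d^k h^α` on the `ℓ∞`-ball of radius `h` around `x`. -/
theorem stmt_7 (d : ℕ) (hd : 1 ≤ d) (k : ℕ) (α : ℝ) (hα : (k : ℝ) < α)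
    (hα' : α ≤ k + 1) (M : ℝ) (hM : 0 < M)
    (B : Set (Fin d → ℝ)) (hB : Convex ℝ B) (hBu : UniqueDiffOn ℝ B)
    (x : Fin d → ℝ) (hx : x ∈ B)
    (f : (Fin d → ℝ) → ℝ) (hf : ContDiffOn ℝ k f B)
    (hbound : ∀ j ≤ k, ∀ u ∈ B, ‖iteratedFDerivWithin ℝ j f B u‖ ≤ M)
    (hHolder : ∀ u ∈ B, ∀ v ∈ B,
      ‖iteratedFDerivWithin ℝ k f B u - iteratedFDerivWithin ℝ k f B v‖ ≤
        M * ‖u - v‖ ^ (α - k))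
    (h : ℝ) (hh : 0 ≤ h) :
    ∀ z ∈ B, ‖z - x‖ ≤ h →
      |f z - ∑ j ∈ Finset.range (k + 1),
          ((j.factorial : ℝ))⁻¹ * iteratedFDerivWithin ℝ j f B x (fun _ => z - x)| ≤
        M * d ^ k * h ^ α :=
  stmt_7_general d hd k α hα M hM B hB hBu x hx f hf hHolder h
end
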